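/- In the game of arboricity, suppose during the imagination-strategy update the real-game colouring f_k (with k colours) and imagined colouring f_{k+1} (with k+1 colours) satisfy the invariant that for every c ≤ k, same c-component in f_{k+1} implies same c-component in f_k. If an edge e = xy is legally assigned a colour c ≤ k in both colourings, or is assigned colour k+1 in f_{k+1} and any legal colour in f_k, or is assigned c ≤ k in f_{k+1} while x and y already lie in the same c-component of f_k and e is assigned some other legal colour in f_k, then the invariant still holds after the assignment. -/

import Mathlib

/-- The spanning subgraph of `G` consisting of those edges given colour `c`
by the partial edge-colouring `f`. -/
def colourSub {V : Type} (G : SimpleGraph V) {k : ℕ} (f : Sym2 V → Option (Fin k))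
    (c : Fin k) : SimpleGraph V where
  Adj u v := G.Adj u v ∧ f s(u, v) = some c
  symm.symm u v h := ⟨h.1.symm, by rw [Sym2.eq_swap]; exact h.2⟩
  loopless.irrefl u h := G.loopless.irrefl u h.1

/-- Assigning colour `c` to the uncoloured edge `xy` is a legal move in the game of
arboricity: it creates no monochromatic cycle. -/
def ArbLegal {V : Type} (G : SimpleGraph V) {k : ℕ} (f : Sym2 V → Option (Fin k))
    (x y : V) (c : Fin k) : Prop :=
  G.Adj x y ∧ f s(x, y) = none ∧ ¬ (colourSub G f c).Reachable x y

/-- The invariant of the imagination strategy: for every colour `c ≤ k`, vertices in the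
same `c`-component of the imagined `(k+1)`-colouring `g` are in the same `c`-component
of the real `k`-colouring `f`. -/
def ComponentInvariant {V : Type} (G : SimpleGraph V) {k : ℕ}
    (f : Sym2 V → Option (Fin k)) (g : Sym2 V → Option (Fin (k + 1))) : Prop :=
  ∀ c : Fin k, ∀ u v : V,
    (colourSub G g c.castSucc).Reachable u v → (colourSub G f c).Reachable u v

/-!
An edge added to the imagined colouring `g` in colour `d.castSucc` joins two vertices that are
already in the same `d`-component of the updated real colouring `f` (in case (a) it is an edge of
that colour there too, in case (c) by hypothesis), and an edge of colour `k + 1` concerns no colour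
`c ≤ k`. Every other edge of `g` is covered by the old invariant, since filling an uncoloured edge
of `f` only enlarges its colour classes. As reachability is the reflexive-transitive closure of
adjacency, the invariant follows one edge at a time.
-/

namespace SimpleGraph

theorem Reachable.of_forall_adj_reachable {V : Type} {H K : SimpleGraph V}
    (h : ∀ u v, H.Adj u v → K.Reachable u v) {u v : V} (huv : H.Reachable u v) :
    K.Reachable u v := by
  rw [reachable_eq_reflTransGen] at huv h ⊢
  exact Relation.reflTransGen_closed h u v huv

end SimpleGraph

section colourSub

variable {V : Type} [DecidableEq V] {G : SimpleGraph V} {k : ℕ} {f : Sym2 V → Option (Fin k)}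

theorem colourSub_le_colourSub_update {e : Sym2 V} (hf : f e = none) (w : Option (Fin k))
    (d : Fin k) : colourSub G f d ≤ colourSub G (Function.update f e w) d := by
  rintro u v ⟨hadj, hcol⟩
  have hne : s(u, v) ≠ e := by
    rintro rfl
    simp [hf] at hcol
  exact ⟨hadj, by rwa [Function.update_of_ne hne]⟩

theorem colourSub_update_adj {e : Sym2 V} {w : Option (Fin k)} {d : Fin k} {u v : V}
    (h : (colourSub G (Function.update f e w) d).Adj u v) :
    (colourSub G f d).Adj u v ∨ (s(u, v) = e ∧ w = some d) := by
  obtain ⟨hadj, hcol⟩ := h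
  by_cases he : s(u, v) = e
  · subst he
    exact Or.inr ⟨rfl, by simpa using hcol⟩
  · exact Or.inl ⟨hadj, by rwa [Function.update_of_ne he] at hcol⟩

end colourSub

theorem ComponentInvariant.update {V : Type} [DecidableEq V] {G : SimpleGraph V} {k : ℕ}
    {f : Sym2 V → Option (Fin k)} {g : Sym2 V → Option (Fin (k + 1))}
    (hinv : ComponentInvariant G f g) {x y : V} (hf : f s(x, y) = none)
    (w : Option (Fin k)) (b : Fin (k + 1))
    (hxy : ∀ d : Fin k, b = d.castSucc →
      (colourSub G (Function.update f s(x, y) w) d).Reachable x y) :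
    ComponentInvariant G (Function.update f s(x, y) w) (Function.update g s(x, y) (some b)) := by
  intro d u v huv
  refine huv.of_forall_adj_reachable fun u v hadj => ?_
  rcases colourSub_update_adj hadj with hold | ⟨hedge, hb⟩
  · exact (hinv d u v hold.reachable).mono (colourSub_le_colourSub_update hf w d)
  · have hxy' := hxy d (Option.some_injective _ hb)
    rcases Sym2.eq_iff.mp hedge with ⟨rfl, rfl⟩ | ⟨rfl, rfl⟩
    exacts [hxy', hxy'.symm]

theorem component_invariant_preserved_general {V : Type} [DecidableEq V] (G : SimpleGraph V)
    (k : ℕ) (f : Sym2 V → Option (Fin k)) (g : Sym2 V → Option (Fin (k + 1)))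
    (hinv : ComponentInvariant G f g)
    (x y : V) (hadj : G.Adj x y) (hf : f s(x, y) = none) :
    -- (a) the same colour `c ≤ k` is legally played in both games
    (∀ c : Fin k, ArbLegal G f x y c → ArbLegal G g x y c.castSucc →
      ComponentInvariant G (Function.update f s(x, y) (some c))
        (Function.update g s(x, y) (some c.castSucc)))
    -- (b) colour `k + 1` is legally played in the imagined game, any legal colour in the real game
    ∧ (∀ c' : Fin k, ArbLegal G g x y (Fin.last k) → ArbLegal G f x y c' →
      ComponentInvariant G (Function.update f s(x, y) (some c'))
        (Function.update g s(x, y) (some (Fin.last k))))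
    -- (c) colour `c ≤ k` is legally played in the imagined game, but `x` and `y` are
    -- already in the same `c`-component of the real game, where some other legal
    -- colour `c'` is played
    ∧ (∀ c c' : Fin k, ArbLegal G g x y c.castSucc →
      (colourSub G f c).Reachable x y → ArbLegal G f x y c' →
      ComponentInvariant G (Function.update f s(x, y) (some c'))
        (Function.update g s(x, y) (some c.castSucc))) := by
  refine ⟨fun c _ _ => ?_, fun c' _ _ => ?_, fun c c' _ hxy _ => ?_⟩
  · refine hinv.update hf _ _ fun d hd => ?_
    obtain rfl := Fin.castSucc_injective k hd
    exact SimpleGraph.Adj.reachable ⟨hadj, by simp⟩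
  · exact hinv.update hf _ _ fun d hd => absurd hd.symm (Fin.castSucc_lt_last d).ne
  · refine hinv.update hf _ _ fun d hd => ?_
    obtain rfl := Fin.castSucc_injective k hd
    exact hxy.mono (colourSub_le_colourSub_update hf _ c)

/-- The component invariant between the real game colouring `f_k` and
the imagined colouring `f_{k+1}` is preserved by one step of the imagination strategy,
in each of the three cases: (a) an edge `e = xy` is legally given the same colour
`c ≤ k` in both colourings; (b) `e` is given colour `k + 1` in `f_{k+1}` and any legal
colour in `f_k`; (c) `e` is given a colour `c ≤ k` in `f_{k+1}` while `x` and `y`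
already lie in the same `c`-component of `f_k`, and `e` is given some other legal
colour in `f_k`. -/
theorem component_invariant_preserved {V : Type} [DecidableEq V] (G : SimpleGraph V)
    (k : ℕ) (f : Sym2 V → Option (Fin k)) (g : Sym2 V → Option (Fin (k + 1)))
    (hinv : ComponentInvariant G f g)
    (x y : V) (hadj : G.Adj x y) (hf : f s(x, y) = none) (hg : g s(x, y) = none) :
    -- (a) the same colour `c ≤ k` is legally played in both games
    (∀ c : Fin k, ArbLegal G f x y c → ArbLegal G g x y c.castSucc →
      ComponentInvariant G (Function.update f s(x, y) (some c))
        (Function.update g s(x, y) (some c.castSucc)))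
    -- (b) colour `k + 1` is legally played in the imagined game, any legal colour in the real game
    ∧ (∀ c' : Fin k, ArbLegal G g x y (Fin.last k) → ArbLegal G f x y c' →
      ComponentInvariant G (Function.update f s(x, y) (some c'))
        (Function.update g s(x, y) (some (Fin.last k))))
    -- (c) colour `c ≤ k` is legally played in the imagined game, but `x` and `y` are
    -- already in the same `c`-component of the real game, where some other legal
    -- colour `c'` is played
    ∧ (∀ c c' : Fin k, ArbLegal G g x y c.castSucc →
      (colourSub G f c).Reachable x y → ArbLegal G f x y c' →
      ComponentInvariant G (Function.update f s(x, y) (some c'))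
        (Function.update g s(x, y) (some c.castSucc))) :=
  component_invariant_preserved_general G k f g hinv x y hadj hf
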